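/- Fix $m > 0$, $k \ge 1$. Let $g_k, g_{-k}$ be independent complex Gaussians with mean $0$ and variance $1$, independent of a nonnegative random variable $Y$ with bounded density $P_k$, with $\sup_k \|P_k\|_{L^\infty} \le C_0 < \infty$. Let $\mathcal{A}_m^k \setminus A_m = \{ Y \le m < Y + (|g_k|^2 + |g_{-k}|^2)/\langle k \rangle^2 \}$. Then $\mathbb{P}(\mathcal{A}_m^k \setminus A_m) \le \frac{C}{\langle k \rangle^2}$ for a constant $C$ depending only on $C_0$ (not on $m$ or $k$). -/

import Mathlib

/-!
Given `W = (‖g₁‖² + ‖g₂‖²)/⟨k⟩²`, which is independent of `Y`, the event says that `Y` falls in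
the window `(m - W, m]`; since the law of `Y` has density at most `C₀`, this has conditional
probability at most `C₀ W`. Averaging over `W`, and using that each of the four real coordinates
of `g₁, g₂` has second moment `1/2`, gives the bound `C₀ 𝔼[W] = 2 C₀/⟨k⟩²`.
-/

open MeasureTheory ProbabilityTheory Real
open scoped ENNReal NNReal

lemma lintegral_sq_gaussianReal_zero (v : ℝ≥0) :
    ∫⁻ x, ENNReal.ofReal (x ^ 2) ∂gaussianReal 0 v = v := by
  have h := ofReal_variance (memLp_id_gaussianReal' (μ := 0) (v := v) 2 (by norm_num))
  rw [variance_id_gaussianReal, evariance_eq_lintegral_ofReal] at h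
  simpa [integral_id_gaussianReal] using h.symm

lemma lintegral_sq_of_map_eq_gaussianReal {Ω : Type*} [MeasurableSpace Ω] {P : Measure Ω}
    {f : Ω → ℝ} (hf : Measurable f) {v : ℝ≥0} (hlaw : P.map f = gaussianReal 0 v) :
    ∫⁻ ω, ENNReal.ofReal (f ω ^ 2) ∂P = v := by
  rw [← lintegral_sq_gaussianReal_zero v, ← hlaw, lintegral_map (by fun_prop) hf]

lemma lintegral_norm_sq_of_map_re_im_eq_gaussianReal {Ω : Type*} [MeasurableSpace Ω]
    {P : Measure Ω} {g : Ω → ℂ} (hg : Measurable g) {v : ℝ≥0}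
    (hre : P.map (fun ω ↦ (g ω).re) = gaussianReal 0 v)
    (him : P.map (fun ω ↦ (g ω).im) = gaussianReal 0 v) :
    ∫⁻ ω, ENNReal.ofReal (‖g ω‖ ^ 2) ∂P = 2 * v := by
  have hsplit : ∀ ω, ENNReal.ofReal (‖g ω‖ ^ 2)
      = ENNReal.ofReal ((g ω).re ^ 2) + ENNReal.ofReal ((g ω).im ^ 2) := fun ω ↦ by
    rw [← ENNReal.ofReal_add (sq_nonneg _) (sq_nonneg _), Complex.sq_norm, Complex.normSq_apply]
    ring_nf
  rw [lintegral_congr hsplit, lintegral_add_left (by fun_prop),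
    lintegral_sq_of_map_eq_gaussianReal (by fun_prop) hre,
    lintegral_sq_of_map_eq_gaussianReal (by fun_prop) him, two_mul]

lemma withDensity_ofReal_Ioc_le {p : ℝ → ℝ} {C₀ : ℝ} (hp : ∀ y, p y ≤ C₀) (a b : ℝ) :
    volume.withDensity (fun y ↦ ENNReal.ofReal (p y)) (Set.Ioc a b)
      ≤ ENNReal.ofReal C₀ * ENNReal.ofReal (b - a) := by
  rw [withDensity_apply _ measurableSet_Ioc, ← Real.volume_Ioc, ← setLIntegral_const]
  exact setLIntegral_mono measurable_const fun y _ ↦ ENNReal.ofReal_le_ofReal (hp y)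

lemma measure_le_lt_add_le_of_indepFun {Ω : Type*} [MeasurableSpace Ω] {P : Measure Ω}
    [IsFiniteMeasure P] {W Y : Ω → ℝ} (hW : Measurable W) (hY : Measurable Y)
    (hWY : IndepFun W Y P) {p : ℝ → ℝ} {C₀ : ℝ}
    (hlaw : P.map Y = volume.withDensity (fun y ↦ ENNReal.ofReal (p y))) (hp : ∀ y, p y ≤ C₀)
    (m : ℝ) :
    P {ω | Y ω ≤ m ∧ m < Y ω + W ω} ≤ ENNReal.ofReal C₀ * ∫⁻ ω, ENNReal.ofReal (W ω) ∂P := by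
  set S : Set (ℝ × ℝ) := {q | q.2 ≤ m ∧ m < q.2 + q.1}
  have hS : MeasurableSet S := by
    refine (measurableSet_le measurable_snd measurable_const).inter ?_
    exact measurableSet_lt measurable_const (measurable_snd.add measurable_fst)
  have hfiber : ∀ w, Prod.mk w ⁻¹' S = Set.Ioc (m - w) m := fun w ↦ by
    ext y
    simp only [S, Set.mem_preimage, Set.mem_ofPred_eq, Set.mem_Ioc]
    constructor <;> rintro ⟨h₁, h₂⟩ <;> constructor <;> linarith
  have hprod := (indepFun_iff_map_prod_eq_prod_map_map hW.aemeasurable hY.aemeasurable).mp hWY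
  calc P {ω | Y ω ≤ m ∧ m < Y ω + W ω}
      = (P.map W).prod (P.map Y) S := by
        rw [← hprod, Measure.map_apply (hW.prodMk hY) hS]; rfl
    _ = ∫⁻ w, P.map Y (Set.Ioc (m - w) m) ∂P.map W := by
        simp only [Measure.prod_apply hS, hfiber]
    _ ≤ ∫⁻ w, ENNReal.ofReal C₀ * ENNReal.ofReal w ∂P.map W := by
        refine lintegral_mono fun w ↦ ?_
        rw [hlaw]
        simpa using withDensity_ofReal_Ioc_le hp (m - w) m
    _ = ENNReal.ofReal C₀ * ∫⁻ ω, ENNReal.ofReal (W ω) ∂P := by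
        rw [lintegral_const_mul _ (by fun_prop), lintegral_map (by fun_prop) hW]

/-- Fix `m > 0`, `k ≥ 1`. For independent standard complex Gaussians `gₖ, g₋ₖ`,
independent of a nonnegative random variable `Y` with density `P_k` bounded by `C₀`,
the event `𝒜ₘᵏ \ Aₘ = {Y ≤ m < Y + (|gₖ|² + |g₋ₖ|²)/⟨k⟩²}` has probability at most
`C/⟨k⟩²` for a constant `C` depending only on `C₀` (not on `m` or `k`). -/
theorem stmt12 (C₀ : ℝ) (hC₀ : 0 < C₀) :
    ∃ C : ℝ, 0 < C ∧
      ∀ {Ω : Type} [MeasurableSpace Ω] (P : Measure Ω) [IsProbabilityMeasure P]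
        (m : ℝ), 0 < m → ∀ (k : ℕ), 1 ≤ k →
        ∀ (g₁ g₂ : Ω → ℂ), Measurable g₁ → Measurable g₂ →
        iIndepFun
          (fun (i : Fin 4) => (match i with
            | 0 => fun ω => (g₁ ω).re
            | 1 => fun ω => (g₁ ω).im
            | 2 => fun ω => (g₂ ω).re
            | 3 => fun ω => (g₂ ω).im : Ω → ℝ)) P →
        (∀ f ∈ ({fun ω => (g₁ ω).re, fun ω => (g₁ ω).im,
            fun ω => (g₂ ω).re, fun ω => (g₂ ω).im} : Set (Ω → ℝ)),
          P.map f = gaussianReal 0 (1/2 : NNReal)) →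
        ∀ (Y : Ω → ℝ), Measurable Y → (∀ ω, 0 ≤ Y ω) →
        IndepFun (fun ω => (g₁ ω, g₂ ω)) Y P →
        ∀ (Pk : ℝ → ℝ),
        P.map Y = volume.withDensity (fun y => ENNReal.ofReal (Pk y)) →
        (∀ y, |Pk y| ≤ C₀) →
        P {ω | Y ω ≤ m ∧
            m < Y ω + (‖g₁ ω‖ ^ 2 + ‖g₂ ω‖ ^ 2) / (1 + (k : ℝ) ^ 2)}
          ≤ ENNReal.ofReal (C / (1 + (k : ℝ) ^ 2)) := by
  refine ⟨2 * C₀, by positivity, ?_⟩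
  intro Ω _ P _ m _ k _ g₁ g₂ hg₁ hg₂ _ hlaw Y hY _ hindep Pk hYlaw hPk
  set K : ℝ := 1 + (k : ℝ) ^ 2
  set W : Ω → ℝ := fun ω ↦ (‖g₁ ω‖ ^ 2 + ‖g₂ ω‖ ^ 2) / K
  have hW : Measurable W := by fun_prop
  have hWY : IndepFun W Y P :=
    hindep.comp (φ := fun z : ℂ × ℂ ↦ (‖z.1‖ ^ 2 + ‖z.2‖ ^ 2) / K) (by fun_prop) measurable_id
  have hmoment : ∫⁻ ω, ENNReal.ofReal (‖g₁ ω‖ ^ 2 + ‖g₂ ω‖ ^ 2) ∂P = 2 := by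
    simp only [ENNReal.ofReal_add (sq_nonneg _) (sq_nonneg _)]
    rw [lintegral_add_left (by fun_prop),
      lintegral_norm_sq_of_map_re_im_eq_gaussianReal hg₁ (hlaw _ (by simp)) (hlaw _ (by simp)),
      lintegral_norm_sq_of_map_re_im_eq_gaussianReal hg₂ (hlaw _ (by simp)) (hlaw _ (by simp))]
    norm_num [ENNReal.mul_inv_cancel, one_add_one_eq_two]
  calc P {ω | Y ω ≤ m ∧ m < Y ω + W ω}
      ≤ ENNReal.ofReal C₀ * ∫⁻ ω, ENNReal.ofReal (W ω) ∂P :=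
        measure_le_lt_add_le_of_indepFun hW hY hWY hYlaw (fun y ↦ (le_abs_self _).trans (hPk y)) m
    _ = ENNReal.ofReal C₀ * (2 * ENNReal.ofReal K⁻¹) := by
        simp only [W, div_eq_mul_inv, ENNReal.ofReal_mul' (inv_nonneg.mpr (by positivity : 0 ≤ K))]
        rw [lintegral_mul_const _ (by fun_prop), hmoment]
    _ = ENNReal.ofReal (2 * C₀ / K) := by
        rw [mul_comm 2 C₀, mul_div_assoc, div_eq_mul_inv 2 K, ENNReal.ofReal_mul hC₀.le,
          ENNReal.ofReal_mul zero_le_two, ENNReal.ofReal_ofNat]
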